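/- arXiv:2405.01387 — 7 statements merged into one kernel-verified Lean document; each statement's English description precedes it below -/
import Mathlib

section
/- If X ⊆ ℝ^n is non-empty, compact and convex, then X contains exactly one lexicographic maximum. -/
noncomputable def sortedComp {n : ℕ} (x : Fin n → ℝ) (k : Fin n) : ℝ :=
  x (Tuple.sort x k)

def IsLexMax {n : ℕ} (X : Set (Fin n → ℝ)) (y : Fin n → ℝ) : Prop :=
  y ∈ X ∧ ∀ x ∈ X, x = y ∨ ∃ i : Fin n,
    (∀ j : Fin n, j < i → sortedComp y j = sortedComp x j) ∧
    sortedComp x i < sortedComp y i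

/-!
Write `S_k z` (`sumSmallest k z`) for the sum of the `k` smallest components of `z`. It is
the minimum of `∑ i ∈ A, z i` over the `k`-element sets `A`, hence continuous and concave.
Maximising `S_1` on `X`, then `S_2` on the maximisers, and so on, gives nested nonempty compact
convex sets `X_k`. On `X_n` every `S_k`, hence the whole sorted vector, is constant, so
`∑ i, z i ^ 2` is constant there and strict convexity makes `X_n` a single point `y`. A point
`x ∈ X` that leaves the chain at step `k + 1` shares `S_1, …, S_k` with `y` but has a smaller
`S_{k+1}`, so `y` beats `x` lexicographically at position `k`.
-/

open Finset Set

lemma Fin.val_le_of_strictMono {k n : ℕ} {f : Fin k → Fin n} (hf : StrictMono f) (i : Fin k) :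
    (i : ℕ) ≤ f i := by
  have h : #((Finset.Iio i).image f) ≤ #(Finset.Iio (f i)) := Finset.card_le_card fun j hj => by
    obtain ⟨a, ha, rfl⟩ := Finset.mem_image.1 hj
    exact Finset.mem_Iio.2 (hf (Finset.mem_Iio.1 ha))
  rwa [Finset.card_image_of_injective _ hf.injective, Fin.card_Iio, Fin.card_Iio] at h

lemma Fin.sum_filter_val_lt_card_le_sum {n : ℕ} {β : Type*} [AddCommMonoid β] [PartialOrder β]
    [IsOrderedAddMonoid β] {g : Fin n → β} (hg : Monotone g) (B : Finset (Fin n)) :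
    ∑ i ∈ {i : Fin n | ↑i < #B}, g i ≤ ∑ i ∈ B, g i := by
  have hB : #B ≤ n := by simpa using Finset.card_le_univ B
  set e := B.orderEmbOfFin rfl
  have hleft : ({i : Fin n | ↑i < #B} : Finset (Fin n)) = univ.map (Fin.castLEEmb hB) := by
    ext j
    simp only [Finset.mem_filter, Finset.mem_univ, true_and, Finset.mem_map, Fin.castLEEmb_apply]
    exact ⟨fun h => ⟨⟨j, h⟩, rfl⟩, by rintro ⟨i, _, rfl⟩; exact i.2⟩
  calc ∑ i ∈ {i : Fin n | ↑i < #B}, g i = ∑ j, g (Fin.castLE hB j) := by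
        rw [hleft, Finset.sum_map]; rfl
    _ ≤ ∑ j, g (e j) := Finset.sum_le_sum fun j _ => hg (Fin.val_le_of_strictMono e.strictMono j)
    _ = ∑ i ∈ B, g i := (Finset.sum_map univ e.toEmbedding g).symm.trans (by simp [e])

lemma strictConvexOn_sum_sq {ι : Type*} [Fintype ι] :
    StrictConvexOn ℝ univ (fun z : ι → ℝ => ∑ i, z i ^ 2) := by
  have hsq := even_two.strictConvexOn_pow two_ne_zero
  refine ⟨convex_univ, fun x _ y _ hxy a b ha hb hab => ?_⟩
  obtain ⟨i, hi⟩ := Function.ne_iff.1 hxy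
  simp only [Pi.add_apply, Pi.smul_apply, smul_eq_mul, Finset.mul_sum, ← Finset.sum_add_distrib]
  exact Finset.sum_lt_sum
    (fun j _ => hsq.convexOn.2 (mem_univ _) (mem_univ _) ha.le hb.le hab)
    ⟨i, Finset.mem_univ i, hsq.2 (mem_univ _) (mem_univ _) hi ha hb hab⟩

section SumSmallest

variable {n : ℕ}

noncomputable def sumSmallest (k : ℕ) (z : Fin n → ℝ) : ℝ :=
  ∑ i ∈ {i : Fin n | ↑i < k}, sortedComp z i

lemma monotone_sortedComp (z : Fin n → ℝ) : Monotone (sortedComp z) :=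
  Tuple.monotone_sort z

lemma sum_comp_sortedComp {β : Type*} [AddCommMonoid β] (f : ℝ → β) (z : Fin n → ℝ) :
    ∑ i, f (sortedComp z i) = ∑ i, f (z i) :=
  Equiv.sum_comp (Tuple.sort z) (fun j => f (z j))

lemma sumSmallest_le_sum (z : Fin n → ℝ) {k : ℕ} {A : Finset (Fin n)} (hA : #A = min n k) :
    sumSmallest k z ≤ ∑ i ∈ A, z i := by
  set B := A.map (Tuple.sort z).symm.toEmbedding
  have hB : ({i : Fin n | ↑i < k} : Finset (Fin n)) =
      ({i : Fin n | ↑i < #B} : Finset (Fin n)) := by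
    ext i
    simp [B, hA]
  calc sumSmallest k z = ∑ i ∈ ({i : Fin n | ↑i < #B} : Finset (Fin n)), sortedComp z i := by
        rw [sumSmallest, hB]
    _ ≤ ∑ i ∈ B, sortedComp z i := Fin.sum_filter_val_lt_card_le_sum (monotone_sortedComp z) B
    _ = ∑ i ∈ A, z i := by simp [B, sortedComp]

lemma exists_card_eq_sumSmallest_eq_sum (z : Fin n → ℝ) (k : ℕ) :
    ∃ A : Finset (Fin n), #A = min n k ∧ sumSmallest k z = ∑ i ∈ A, z i :=
  ⟨({i : Fin n | ↑i < k} : Finset (Fin n)).map (Tuple.sort z).toEmbedding,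
    by simp [Fin.card_filter_val_lt], by simp [sumSmallest, sortedComp]⟩

lemma sumSmallest_eq_inf' (k : ℕ) (z : Fin n → ℝ) :
    sumSmallest k z = (powersetCard (min n k) univ).inf' (powersetCard_nonempty.2 (by simp))
      (fun A => ∑ i ∈ A, z i) := by
  obtain ⟨A, hA, hsum⟩ := exists_card_eq_sumSmallest_eq_sum z k
  refine le_antisymm (le_inf' _ _ fun B hB => sumSmallest_le_sum z (mem_powersetCard_univ.1 hB)) ?_
  rw [hsum]
  exact inf'_le _ (mem_powersetCard_univ.2 hA)

lemma continuous_sumSmallest (k : ℕ) : Continuous (sumSmallest (n := n) k) := by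
  rw [funext (sumSmallest_eq_inf' k)]
  exact Continuous.finset_inf'_apply _ fun A _ =>
    continuous_finsetSum A fun i _ => continuous_apply i

lemma concaveOn_sumSmallest (k : ℕ) : ConcaveOn ℝ univ (sumSmallest (n := n) k) := by
  refine ⟨convex_univ, fun x _ y _ a b ha hb _ => ?_⟩
  obtain ⟨A, hA, hsum⟩ := exists_card_eq_sumSmallest_eq_sum (a • x + b • y) k
  calc a • sumSmallest k x + b • sumSmallest k y ≤ a • ∑ i ∈ A, x i + b • ∑ i ∈ A, y i := by
        gcongr <;> exact sumSmallest_le_sum _ hA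
    _ = sumSmallest k (a • x + b • y) := by
        simp [hsum, Finset.mul_sum, Finset.sum_add_distrib]

lemma sumSmallest_zero (z : Fin n → ℝ) : sumSmallest 0 z = 0 := by
  simp [sumSmallest]

lemma sumSmallest_succ (z : Fin n → ℝ) (i : Fin n) :
    sumSmallest (i + 1) z = sumSmallest i z + sortedComp z i := by
  have h : ({j : Fin n | (j : ℕ) < (i : ℕ) + 1} : Finset (Fin n)) =
      insert i ({j : Fin n | (j : ℕ) < (i : ℕ)} : Finset (Fin n)) := by
    ext j
    simp only [Finset.mem_filter, Finset.mem_univ, true_and, Finset.mem_insert, Fin.ext_iff]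
    omega
  rw [sumSmallest, h, Finset.sum_insert (by simp), add_comm, sumSmallest]

end SumSmallest

section Maximizers

variable {E : Type*} {K : Set E} {f : E → ℝ}

lemma IsCompact.sep_isMaxOn [TopologicalSpace E] (hK : IsCompact K) (hf : Continuous f) :
    IsCompact {x ∈ K | IsMaxOn f K x} := by
  have h : {x ∈ K | IsMaxOn f K x} = K ∩ ⋂ z ∈ K, {x | f z ≤ f x} := by
    ext x
    simp [isMaxOn_iff]
  rw [h]
  exact hK.inter_right (isClosed_biInter fun z _ => isClosed_le continuous_const hf)

lemma ConcaveOn.convex_sep_isMaxOn [AddCommGroup E] [Module ℝ E] (hf : ConcaveOn ℝ K f) :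
    Convex ℝ {x ∈ K | IsMaxOn f K x} := by
  rintro x ⟨hxK, hx⟩ y ⟨hyK, hy⟩ a b ha hb hab
  refine ⟨hf.1 hxK hyK ha hb hab, fun z hz => ?_⟩
  calc f z = a • f z + b • f z := by rw [← add_smul, hab, one_smul]
    _ ≤ a • f x + b • f y := by gcongr; exacts [hx hz, hy hz]
    _ ≤ f (a • x + b • y) := hf.2 hxK hyK ha hb hab

end Maximizers

section LexChain

variable {n : ℕ} {X : Set (Fin n → ℝ)}

def lexChain (X : Set (Fin n → ℝ)) : ℕ → Set (Fin n → ℝ)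
  | 0 => X
  | k + 1 => {x ∈ lexChain X k | IsMaxOn (sumSmallest (k + 1)) (lexChain X k) x}

lemma lexChain_antitone (X : Set (Fin n → ℝ)) : Antitone (lexChain X) :=
  antitone_nat_of_succ_le fun _ _ hx => hx.1

lemma isCompact_lexChain (hX : IsCompact X) (k : ℕ) : IsCompact (lexChain X k) := by
  induction k with
  | zero => exact hX
  | succ k ih => exact ih.sep_isMaxOn (continuous_sumSmallest (k + 1))

lemma convex_lexChain (hX : Convex ℝ X) (k : ℕ) : Convex ℝ (lexChain X k) := by
  induction k with
  | zero => exact hX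
  | succ k ih =>
    exact ((concaveOn_sumSmallest (k + 1)).subset (subset_univ _) ih).convex_sep_isMaxOn

lemma lexChain_nonempty (hX : IsCompact X) (hne : X.Nonempty) (k : ℕ) :
    (lexChain X k).Nonempty := by
  induction k with
  | zero => exact hne
  | succ k ih =>
    obtain ⟨x, hx, hmax⟩ := (isCompact_lexChain hX k).exists_isMaxOn ih
      (continuous_sumSmallest (k + 1)).continuousOn
    exact ⟨x, hx, hmax⟩

lemma sumSmallest_eq_of_mem_lexChain {j k : ℕ} {x y : Fin n → ℝ} (hj : j ≤ k)
    (hx : x ∈ lexChain X k) (hy : y ∈ lexChain X k) : sumSmallest j x = sumSmallest j y := by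
  cases j with
  | zero => rw [sumSmallest_zero, sumSmallest_zero]
  | succ j =>
    obtain ⟨hx', hxmax⟩ := lexChain_antitone X hj hx
    obtain ⟨hy', hymax⟩ := lexChain_antitone X hj hy
    exact le_antisymm (hymax hx') (hxmax hy')

lemma sortedComp_eq_of_mem_lexChain {k : ℕ} {x y : Fin n → ℝ} (hx : x ∈ lexChain X k)
    (hy : y ∈ lexChain X k) {i : Fin n} (hi : (i : ℕ) < k) : sortedComp x i = sortedComp y i := by
  have h := sumSmallest_eq_of_mem_lexChain hi hx hy
  rw [sumSmallest_succ, sumSmallest_succ, sumSmallest_eq_of_mem_lexChain hi.le hx hy] at h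
  exact add_left_cancel h

lemma sortedComp_lt_of_mem_lexChain_of_notMem_succ {k : ℕ} (hk : k < n) {x y : Fin n → ℝ}
    (hx : x ∈ lexChain X k) (hx' : x ∉ lexChain X (k + 1)) (hy : y ∈ lexChain X (k + 1)) :
    sortedComp x ⟨k, hk⟩ < sortedComp y ⟨k, hk⟩ := by
  obtain ⟨z, hz, hxz⟩ : ∃ z ∈ lexChain X k, sumSmallest (k + 1) x < sumSmallest (k + 1) z := by
    simpa [lexChain, hx, isMaxOn_iff] using hx'
  have hlt := hxz.trans_le (hy.2 hz)
  have h := sumSmallest_eq_of_mem_lexChain le_rfl hx (lexChain_antitone X k.le_succ hy)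
  rw [show k + 1 = ((⟨k, hk⟩ : Fin n) : ℕ) + 1 from rfl, sumSmallest_succ, sumSmallest_succ] at hlt
  linarith

lemma lexChain_subsingleton (hX : Convex ℝ X) : (lexChain X n).Subsingleton := by
  intro x hx y hy
  have hf := strictConvexOn_sum_sq.subset (subset_univ _) (convex_lexChain hX n)
  have hconst : ∀ z ∈ lexChain X n, ∑ i, z i ^ 2 = ∑ i, y i ^ 2 := fun z hz => by
    simp only [← sum_comp_sortedComp (· ^ 2) z, ← sum_comp_sortedComp (· ^ 2) y,
      sortedComp_eq_of_mem_lexChain hz hy (Fin.is_lt _)]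
  have hmin : ∀ w ∈ lexChain X n, IsMinOn (fun z : Fin n → ℝ => ∑ i, z i ^ 2) (lexChain X n) w :=
    fun w hw z hz => ((hconst z hz).trans (hconst w hw).symm).ge
  exact hf.eq_of_isMinOn (hmin x hx) (hmin y hy) hx hy

lemma exists_mem_lexChain_notMem_succ {x : Fin n → ℝ} {m : ℕ} (hx : x ∈ X)
    (hxm : x ∉ lexChain X m) : ∃ k < m, x ∈ lexChain X k ∧ x ∉ lexChain X (k + 1) := by
  obtain ⟨k, hk, hk'⟩ := Nat.exists_not_and_succ_of_not_zero_of_exists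
    (p := fun k => x ∉ lexChain X k) (not_not.2 hx) ⟨m, hxm⟩
  rw [not_not] at hk
  exact ⟨k, lt_of_not_ge fun hmk => hxm (lexChain_antitone X hmk hk), hk, hk'⟩

end LexChain

lemma IsLexMax.eq {n : ℕ} {X : Set (Fin n → ℝ)} {y y' : Fin n → ℝ} (hy : IsLexMax X y)
    (hy' : IsLexMax X y') : y = y' := by
  rcases hy.2 y' hy'.1 with h | ⟨i, hi, hlt⟩
  · exact h.symm
  rcases hy'.2 y hy.1 with h | ⟨i', hi', hlt'⟩
  · exact h
  rcases lt_trichotomy i i' with h | rfl | h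
  · exact absurd (hi' i h) hlt.ne
  · exact absurd hlt (not_lt_of_gt hlt')
  · exact absurd (hi i' h) hlt'.ne

theorem lexmax_unique {n : ℕ} (X : Set (Fin n → ℝ)) (hne : X.Nonempty)
    (hX : IsCompact X) (hconv : Convex ℝ X) : ∃! y, IsLexMax X y := by
  obtain ⟨y, hy⟩ := lexChain_nonempty hX hne n
  have hlex : IsLexMax X y := by
    refine ⟨lexChain_antitone X (Nat.zero_le n) hy, fun x hx => ?_⟩
    by_cases hxn : x ∈ lexChain X n
    · exact Or.inl (lexChain_subsingleton hconv hxn hy)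
    obtain ⟨k, hk, hxk, hxk'⟩ := exists_mem_lexChain_notMem_succ hx hxn
    have hyk : y ∈ lexChain X (k + 1) := lexChain_antitone X hk hy
    exact Or.inr ⟨⟨k, hk⟩,
      fun j hj => sortedComp_eq_of_mem_lexChain (lexChain_antitone X k.le_succ hyk) hxk hj,
      sortedComp_lt_of_mem_lexChain_of_notMem_succ hk hxk hxk' hyk⟩
  exact ⟨y, hlex, fun y' hy' => hy'.eq hlex⟩
end

section
/- Suppose x* is a lexicographic maximum of X ⊆ ℝ^n. If Algorithm A (the progressive filling algorithm) is run with tolerance ε = 0, then every possible output x̂ of A satisfies σ_i(x̂) = σ_i(x*) for all i ∈ [n]; in particular x̂ is itself a lexicographic maximum. Conversely, every lexicographic maximum of X is a possible output of A with ε = 0. -/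
/-- The value of the optimization problem at iteration `k` of the progressive
filling algorithm, given previous iterate `y`. -/
noncomputable def Hfun {n : ℕ} (X : Set (Fin n → ℝ)) (k : Fin n) (y : Fin n → ℝ) : ℝ :=
  sSup {v : ℝ | ∃ z ∈ X,
    (∀ i : Fin n, i < k → sortedComp y i ≤ sortedComp z i) ∧ v = sortedComp z k}

/-- `out` is a possible output of the progressive filling algorithm on `(X, ε)`. -/
def PossibleOutput {n : ℕ} (X : Set (Fin n → ℝ)) (ε : ℝ) (out : Fin n → ℝ) : Prop :=
  ∃ seq : Fin (n + 1) → (Fin n → ℝ),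
    seq (Fin.last n) = out ∧
    ∀ k : Fin n,
      seq k.succ ∈ X ∧
      (∀ i : Fin n, i < k → sortedComp (seq k.castSucc) i ≤ sortedComp (seq k.succ) i) ∧
      Hfun X k (seq k.castSucc) - ε ≤ sortedComp (seq k.succ) k

/-
A lexicographic maximum `x` of `X` is unique and, whenever a feasible point dominates its first `k`
sorted components, agrees with `x` there and is no larger in the `k`-th one. Hence, once an iterate
agrees with `x` on the first `k` sorted components, the optimal value `Hfun X k` of the next step is
exactly `σ_k(x)`, attained by `x` itself. Inductively, every iterate of the algorithm with `ε = 0`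
agrees with `x` on all sorted components fixed so far, so the output has the sorted components of
`x` and, by uniqueness, equals `x`. Conversely, the constant run at a lexicographic maximum is a
valid run.
-/

namespace IsLexMax

variable {n : ℕ} {X : Set (Fin n → ℝ)} {x z : Fin n → ℝ}

lemma sortedComp_prefix_eq_and_le (hx : IsLexMax X x) (hz : z ∈ X) (k : Fin n)
    (h : ∀ i < k, sortedComp x i ≤ sortedComp z i) :
    (∀ i < k, sortedComp z i = sortedComp x i) ∧ sortedComp z k ≤ sortedComp x k := by
  rcases hx.2 z hz with rfl | ⟨j, hprefix, hlt⟩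
  · exact ⟨fun _ _ => rfl, le_rfl⟩
  have hkj : k ≤ j := not_lt.mp fun hjk => (h j hjk).not_gt hlt
  refine ⟨fun i hi => (hprefix i (hi.trans_le hkj)).symm, ?_⟩
  rcases hkj.lt_or_eq with hkj | rfl
  · exact (hprefix k hkj).ge
  · exact hlt.le

lemma eq_of_sortedComp_eq (hx : IsLexMax X x) (hz : z ∈ X)
    (h : ∀ i, sortedComp z i = sortedComp x i) : z = x := by
  rcases hx.2 z hz with hzx | ⟨j, -, hlt⟩
  · exact hzx
  · exact absurd (h j) hlt.ne

lemma hfun_eq_sortedComp (hx : IsLexMax X x) {y : Fin n → ℝ} (k : Fin n)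
    (h : ∀ i < k, sortedComp y i = sortedComp x i) : Hfun X k y = sortedComp x k := by
  refine IsGreatest.csSup_eq ⟨⟨x, hx.1, fun i hi => (h i hi).le, rfl⟩, ?_⟩
  rintro v ⟨z, hz, hyz, rfl⟩
  exact (hx.sortedComp_prefix_eq_and_le hz k fun i hi => (h i hi).ge.trans (hyz i hi)).2

lemma possibleOutput_zero (hx : IsLexMax X x) : PossibleOutput X 0 x :=
  ⟨fun _ => x, rfl, fun k =>
    ⟨hx.1, fun _ _ => le_rfl, by rw [hx.hfun_eq_sortedComp k fun _ _ => rfl, sub_zero]⟩⟩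

lemma sortedComp_eq_of_possibleOutput_zero (hx : IsLexMax X x) {out : Fin n → ℝ}
    (hout : PossibleOutput X 0 out) (i : Fin n) : sortedComp out i = sortedComp x i := by
  obtain ⟨seq, rfl, hstep⟩ := hout
  suffices h : ∀ m : Fin (n + 1), ∀ i : Fin n, i.castSucc < m →
      sortedComp (seq m) i = sortedComp x i from h _ i (Fin.castSucc_lt_last i)
  intro m
  induction m using Fin.induction with
  | zero => exact fun i hi => absurd hi (Fin.not_lt_zero _)
  | succ k ih =>
    obtain ⟨hmem, hmono, hopt⟩ := hstep k
    have hprev : ∀ i < k, sortedComp (seq k.castSucc) i = sortedComp x i := fun i hi =>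
      ih i (Fin.castSucc_lt_castSucc_iff.mpr hi)
    rw [hx.hfun_eq_sortedComp k hprev, sub_zero] at hopt
    have hdom : ∀ i < k, sortedComp x i ≤ sortedComp (seq k.succ) i := fun i hi =>
      (hprev i hi).ge.trans (hmono i hi)
    obtain ⟨hprefix, hle⟩ := hx.sortedComp_prefix_eq_and_le hmem k hdom
    intro i hi
    rcases (Fin.castSucc_lt_succ_iff.mp hi).lt_or_eq with hik | rfl
    · exact hprefix i hik
    · exact le_antisymm hle hopt

end IsLexMax

lemma PossibleOutput.mem {n : ℕ} [NeZero n] {X : Set (Fin n → ℝ)} {ε : ℝ}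
    {out : Fin n → ℝ} (hout : PossibleOutput X ε out) : out ∈ X := by
  obtain ⟨seq, rfl, hstep⟩ := hout
  obtain ⟨m, rfl⟩ := Nat.exists_eq_succ_of_ne_zero (NeZero.ne n)
  exact (hstep (Fin.last m)).1

lemma IsLexMax.eq_of_possibleOutput_zero {n : ℕ} {X : Set (Fin n → ℝ)} {x out : Fin n → ℝ}
    (hx : IsLexMax X x) (hout : PossibleOutput X 0 out) : out = x := by
  cases n with
  | zero => exact Subsingleton.elim _ _
  | succ m => exact hx.eq_of_sortedComp_eq hout.mem (hx.sortedComp_eq_of_possibleOutput_zero hout)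

theorem algorithm_zero_tolerance_iff_lexmax_general {n : ℕ} (X : Set (Fin n → ℝ))
    (xstar : Fin n → ℝ) (hstar : IsLexMax X xstar) :
    (∀ xhat, PossibleOutput X 0 xhat →
      (∀ i : Fin n, sortedComp xhat i = sortedComp xstar i) ∧ IsLexMax X xhat) ∧
    (∀ y, IsLexMax X y → PossibleOutput X 0 y) := by
  refine ⟨fun xhat hout => ?_, fun y hy => hy.possibleOutput_zero⟩
  obtain rfl := hstar.eq_of_possibleOutput_zero hout
  exact ⟨fun _ => rfl, hstar⟩

theorem algorithm_zero_tolerance_iff_lexmax {n : ℕ} (X : Set (Fin n → ℝ))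
    (hX : IsCompact X) (xstar : Fin n → ℝ) (hstar : IsLexMax X xstar) :
    (∀ xhat, PossibleOutput X 0 xhat →
      (∀ i : Fin n, sortedComp xhat i = sortedComp xstar i) ∧ IsLexMax X xhat) ∧
    (∀ y, IsLexMax X y → PossibleOutput X 0 y) :=
  algorithm_zero_tolerance_iff_lexmax_general X xstar hstar
end

section
/- For any X ⊆ ℝ^n, γ ∈ [0,1), c > 0, and k ∈ [n], if x_{c,γ} ∈ X satisfies L_c(x_{c,γ}) ≤ inf_{x∈X} L_c(x) + γ·exp(−c‖X‖_∞), then σ_k(x_{c,γ}) ≥ sup{ σ_k(x) : x ∈ X, σ_i(x) ≥ σ_i(x_{c,γ}) for all i ∈ [k−1] } − (1/c)·log((n−k+1)/(1−γ)). -/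
open Real

/-- The exponential loss. -/
noncomputable def expLoss {n : ℕ} (c : ℝ) (x : Fin n → ℝ) : ℝ :=
  ∑ i, Real.exp (-c * x i)

/-- The sup of the sup-norms of elements of X, i.e. ‖X‖_∞. -/
noncomputable def supNorm {n : ℕ} (X : Set (Fin n → ℝ)) : ℝ :=
  sSup ((fun x : Fin n → ℝ => ‖x‖) '' X)

lemma expLoss_eq_sorted {n : ℕ} (c : ℝ) (x : Fin n → ℝ) :
    expLoss c x = ∑ i, Real.exp (-c * sortedComp x i) :=
  (Equiv.sum_comp (Tuple.sort x) (fun i => Real.exp (-c * x i))).symm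

theorem helper_lemma {n : ℕ} (X : Set (Fin n → ℝ)) (γ c : ℝ)
    (hγ0 : 0 ≤ γ) (hγ1 : γ < 1) (hc : 0 < c)
    (hbdd : BddAbove ((fun x : Fin n → ℝ => ‖x‖) '' X))
    (k : Fin n) (xc : Fin n → ℝ) (hxc : xc ∈ X)
    (hloss : expLoss c xc ≤ sInf (expLoss c '' X) + γ * Real.exp (-c * supNorm X)) :
    sSup {v : ℝ | ∃ x ∈ X,
        (∀ i : Fin n, i < k → sortedComp xc i ≤ sortedComp x i) ∧ v = sortedComp x k}
      - (1 / c) * Real.log ((n - k.val) / (1 - γ)) ≤ sortedComp xc k := by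
  have h1γ : (0:ℝ) < 1 - γ := by linarith
  have hA : (1:ℝ) ≤ (n:ℝ) - k.val := by
    have hk : (k.val:ℝ) + 1 ≤ (n:ℝ) := by exact_mod_cast k.isLt
    linarith
  set A : ℝ := (n:ℝ) - k.val with hAdef
  set r : ℝ := A / (1 - γ) with hrdef
  have hrpos : 0 < r := div_pos (by linarith) h1γ
  -- the key pointwise bound
  have key : ∀ x ∈ X, (∀ i : Fin n, i < k → sortedComp xc i ≤ sortedComp x i) →
      sortedComp x k ≤ sortedComp xc k + (1/c) * Real.log r := by
    intro x hx hmon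
    set f : Fin n → ℝ := fun i => Real.exp (-c * sortedComp xc i) with hf
    set g : Fin n → ℝ := fun i => Real.exp (-c * sortedComp x i) with hg
    set s₁ : Finset (Fin n) := Finset.univ.filter (fun i => i < k) with hs₁
    set s₂ : Finset (Fin n) := Finset.univ.filter (fun i => ¬ i < k) with hs₂
    have hsplit_f : expLoss c xc = ∑ i ∈ s₁, f i + ∑ i ∈ s₂, f i := by
      rw [expLoss_eq_sorted, ← Finset.sum_filter_add_sum_filter_not Finset.univ (fun i => i < k)]
    have hsplit_g : expLoss c x = ∑ i ∈ s₁, g i + ∑ i ∈ s₂, g i := by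
      rw [expLoss_eq_sorted, ← Finset.sum_filter_add_sum_filter_not Finset.univ (fun i => i < k)]
    -- lower bound on expLoss xc
    have hkmem : k ∈ s₂ := by simp [hs₂]
    have hlb : ∑ i ∈ s₁, f i + f k ≤ expLoss c xc := by
      rw [hsplit_f]
      have : f k ≤ ∑ i ∈ s₂, f i :=
        Finset.single_le_sum (f := f) (fun i _ => (Real.exp_pos _).le) hkmem
      linarith
    -- upper bound on expLoss x
    have hg_le : ∀ i ∈ s₂, g i ≤ g k := by
      intro i hi
      have hki : k ≤ i := by simpa [hs₂, not_lt] using hi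
      have h2 : sortedComp x k ≤ sortedComp x i := Tuple.monotone_sort x hki
      exact Real.exp_le_exp.mpr (by nlinarith)
    have hcard : (s₂.card : ℝ) = A := by
      have : s₂.card = n - k.val := by
        simp only [hs₂, not_lt]
        rw [show Finset.univ.filter (fun i => k ≤ i) = Finset.Ici k by ext; simp]
        exact Fin.card_Ici k
      rw [this, hAdef]
      have := k.isLt.le
      push_cast [Nat.cast_sub this]
      ring
    have hub2 : ∑ i ∈ s₂, g i ≤ A * g k := by
      calc ∑ i ∈ s₂, g i ≤ s₂.card • g k := Finset.sum_le_card_nsmul _ _ _ hg_le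
        _ = (s₂.card : ℝ) * g k := nsmul_eq_mul _ _
        _ = A * g k := by rw [hcard]
    have hub1 : ∑ i ∈ s₁, g i ≤ ∑ i ∈ s₁, f i := by
      apply Finset.sum_le_sum
      intro i hi
      have hik : i < k := by simpa [hs₁] using hi
      exact Real.exp_le_exp.mpr (by nlinarith [hmon i hik])
    -- sInf ≤ expLoss x
    have hbb : BddBelow (expLoss c '' X) := by
      refine ⟨0, ?_⟩
      rintro y ⟨z, _, rfl⟩
      exact Finset.sum_nonneg fun i _ => (Real.exp_pos _).le
    have hinf : sInf (expLoss c '' X) ≤ expLoss c x := csInf_le hbb ⟨x, hx, rfl⟩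
    -- exp(-c supNorm) ≤ f k
    have hsk : sortedComp xc k ≤ supNorm X := by
      refine le_trans (le_trans (le_abs_self _) (norm_le_pi_norm xc _)) ?_
      exact le_csSup hbdd ⟨xc, hxc, rfl⟩
    have hexp : Real.exp (-c * supNorm X) ≤ f k :=
      Real.exp_le_exp.mpr (by nlinarith)
    -- combine
    have hgk : (1 - γ) * f k ≤ A * g k := by nlinarith [hloss, hinf]
    have hfk : f k ≤ Real.exp (Real.log r + (-c * sortedComp x k)) := by
      rw [Real.exp_add, Real.exp_log hrpos]
      rw [hrdef]
      have hgk' : f k ≤ (A / (1 - γ)) * g k := by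
        rw [div_mul_eq_mul_div, le_div_iff₀ h1γ]
        nlinarith
      simpa [hg] using hgk'
    have hle := Real.exp_le_exp.mp (by simpa [hf] using hfk)
    -- -c * σk(xc) ≤ log r - c * σk(x)
    have : c * sortedComp x k ≤ c * (sortedComp xc k + (1/c) * Real.log r) := by
      field_simp
      nlinarith
    exact le_of_mul_le_mul_left this hc
  -- conclude via csSup_le
  rw [sub_le_iff_le_add]
  apply csSup_le
  · exact ⟨sortedComp xc k, xc, hxc, fun i _ => le_refl _, rfl⟩
  · rintro v ⟨x, hx, hm, rfl⟩
    have := key x hx hm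
    linarith
end

section
/- Let n ≥ 2, X ⊆ ℝ^n with ‖X‖_∞ < ∞, x* a lexicographic maximum of X, c > 0 and γ ∈ [0,1). If x_{c,γ} ∈ X satisfies L_c(x_{c,γ}) ≤ inf_{x∈X} L_c(x) + γ·exp(−c‖X‖_∞), then for k ∈ {1,2}: σ_k(x*) − σ_k(x_{c,γ}) ≤ (1/c)·log((n−k+1)/(1−γ)). -/
open Real

/-! Compare the two exponential losses term by term in sorted order. Below index `k`, lexicographic
maximality makes each term of `x*` at most the matching term of `x_{c,γ}`; it only controls the
first sorted component, hence `k ≤ 1`. From `k` on, the `n - k` terms of `x*` are at most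
`exp (-c σ_k(x*))` each, while `x_{c,γ}` pays at least `exp (-c σ_k(x_{c,γ}))`, which dominates
`exp (-c ‖X‖_∞)`. So `(1 - γ) exp (-c σ_k(x_{c,γ})) ≤ (n - k) exp (-c σ_k(x*))`; take logarithms. -/

namespace Fin

theorem sum_Iio_add_sum_Ici {n : ℕ} {M : Type*} [AddCommMonoid M] (f : Fin n → M) (k : Fin n) :
    ∑ j ∈ Finset.Iio k, f j + ∑ j ∈ Finset.Ici k, f j = ∑ j, f j := by
  rw [← Finset.filter_gt_eq_Iio, ← Finset.filter_le_eq_Ici]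
  simpa only [not_lt] using Finset.sum_filter_add_sum_filter_not Finset.univ (· < k) f

end Fin

section SortedComp

variable {n : ℕ}

theorem sortedComp_monotone (x : Fin n → ℝ) : Monotone (sortedComp x) :=
  Tuple.monotone_sort x

theorem sortedComp_le_norm (x : Fin n → ℝ) (k : Fin n) : sortedComp x k ≤ ‖x‖ :=
  (le_abs_self _).trans ((Real.norm_eq_abs _).symm.trans_le (norm_le_pi_norm x _))

theorem IsLexMax.sortedComp_le {X : Set (Fin n → ℝ)} {y x : Fin n → ℝ} (hy : IsLexMax X y)
    (hx : x ∈ X) (j : Fin n) (hj : (j : ℕ) = 0) : sortedComp x j ≤ sortedComp y j := by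
  rcases hy.2 x hx with rfl | ⟨i, hprefix, hlt⟩
  · exact le_rfl
  · rcases lt_or_ge j i with hji | hij
    · exact (hprefix j hji).ge
    · obtain rfl : i = j := Fin.ext (by omega)
      exact hlt.le

end SortedComp

section ExpLoss

variable {n : ℕ} {c : ℝ}

theorem expLoss_nonneg (c : ℝ) (x : Fin n → ℝ) : 0 ≤ expLoss c x :=
  Finset.sum_nonneg fun _ _ => (exp_pos _).le

theorem expLoss_eq_sum_sortedComp (c : ℝ) (x : Fin n → ℝ) :
    expLoss c x = ∑ j, exp (-c * sortedComp x j) :=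
  (Equiv.sum_comp (Tuple.sort x) fun i => exp (-c * x i)).symm

theorem exp_neg_mul_le_exp_neg_mul (hc : 0 ≤ c) {a b : ℝ} (hab : a ≤ b) :
    exp (-c * b) ≤ exp (-c * a) :=
  exp_le_exp.2 (mul_le_mul_of_nonpos_left hab (neg_nonpos.2 hc))

theorem sum_Iio_add_exp_sortedComp_le_expLoss (c : ℝ) (x : Fin n → ℝ) (k : Fin n) :
    ∑ j ∈ Finset.Iio k, exp (-c * sortedComp x j) + exp (-c * sortedComp x k) ≤ expLoss c x := by
  rw [expLoss_eq_sum_sortedComp, ← Fin.sum_Iio_add_sum_Ici _ k]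
  gcongr
  exact Finset.single_le_sum (f := fun j => exp (-c * sortedComp x j)) (fun _ _ => (exp_pos _).le)
    (Finset.mem_Ici.2 le_rfl)

theorem expLoss_le_sum_Iio_add_mul_exp_sortedComp (hc : 0 ≤ c) (y : Fin n → ℝ) (k : Fin n) :
    expLoss c y ≤
      ∑ j ∈ Finset.Iio k, exp (-c * sortedComp y j) + (n - k) * exp (-c * sortedComp y k) := by
  rw [expLoss_eq_sum_sortedComp, ← Fin.sum_Iio_add_sum_Ici _ k]
  gcongr
  calc ∑ j ∈ Finset.Ici k, exp (-c * sortedComp y j)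
      ≤ ∑ _j ∈ Finset.Ici k, exp (-c * sortedComp y k) :=
        Finset.sum_le_sum fun j hj =>
          exp_neg_mul_le_exp_neg_mul hc (sortedComp_monotone y (Finset.mem_Ici.1 hj))
    _ = (n - k) * exp (-c * sortedComp y k) := by
        rw [Finset.sum_const, Fin.card_Ici, nsmul_eq_mul, Nat.cast_sub k.is_le']

theorem one_sub_mul_exp_sortedComp_le {γ : ℝ} (hc : 0 ≤ c) {x y : Fin n → ℝ} {k : Fin n}
    (hprefix : ∀ j < k, sortedComp x j ≤ sortedComp y j)
    (hloss : expLoss c x ≤ expLoss c y + γ * exp (-c * sortedComp x k)) :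
    (1 - γ) * exp (-c * sortedComp x k) ≤ (n - k) * exp (-c * sortedComp y k) := by
  have hx := sum_Iio_add_exp_sortedComp_le_expLoss c x k
  have hy := expLoss_le_sum_Iio_add_mul_exp_sortedComp hc y k
  have hbelow : ∑ j ∈ Finset.Iio k, exp (-c * sortedComp y j) ≤
      ∑ j ∈ Finset.Iio k, exp (-c * sortedComp x j) :=
    Finset.sum_le_sum fun j hj => exp_neg_mul_le_exp_neg_mul hc (hprefix j (Finset.mem_Iio.1 hj))
  linarith

theorem expLoss_le_add_of_le_sInf_add {X : Set (Fin n → ℝ)}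
    (hbdd : BddAbove ((fun x : Fin n → ℝ => ‖x‖) '' X)) {γ : ℝ} (hc : 0 ≤ c) (hγ : 0 ≤ γ)
    {x y : Fin n → ℝ} (hx : x ∈ X) (hy : y ∈ X)
    (hloss : expLoss c x ≤ sInf (expLoss c '' X) + γ * exp (-c * supNorm X)) (k : Fin n) :
    expLoss c x ≤ expLoss c y + γ * exp (-c * sortedComp x k) := by
  have hinf : sInf (expLoss c '' X) ≤ expLoss c y :=
    csInf_le ⟨0, by rintro _ ⟨z, -, rfl⟩; exact expLoss_nonneg c z⟩ (Set.mem_image_of_mem _ hy)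
  have hnorm : sortedComp x k ≤ supNorm X :=
    (sortedComp_le_norm x k).trans (le_csSup hbdd (Set.mem_image_of_mem _ hx))
  have hslack := mul_le_mul_of_nonneg_left (exp_neg_mul_le_exp_neg_mul hc hnorm) hγ
  linarith

end ExpLoss

theorem sub_le_one_div_mul_log_of_mul_exp_le {c t m a b : ℝ} (hc : 0 < c) (ht : 0 < t)
    (hm : 0 < m) (h : t * exp (-c * a) ≤ m * exp (-c * b)) :
    b - a ≤ 1 / c * log (m / t) := by
  have hlog := log_le_log (by positivity) h
  rw [log_mul ht.ne' (exp_pos _).ne', log_mul hm.ne' (exp_pos _).ne', log_exp, log_exp] at hlog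
  rw [log_div hm.ne' ht.ne', one_div, inv_mul_eq_div, le_div_iff₀ hc]
  linarith

theorem first_two_components_rate_general {n : ℕ} (X : Set (Fin n → ℝ))
    (hbdd : BddAbove ((fun x : Fin n → ℝ => ‖x‖) '' X))
    (xstar : Fin n → ℝ) (hstar : IsLexMax X xstar)
    (c γ : ℝ) (hc : 0 < c) (hγ0 : 0 ≤ γ) (hγ1 : γ < 1)
    (xc : Fin n → ℝ) (hxc : xc ∈ X)
    (hloss : expLoss c xc ≤ sInf (expLoss c '' X) + γ * Real.exp (-c * supNorm X)) :
    ∀ k : Fin n, k.val < 2 →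
      sortedComp xstar k - sortedComp xc k ≤ (1 / c) * Real.log ((n - k.val) / (1 - γ)) := by
  intro k hk
  have hprefix : ∀ j < k, sortedComp xc j ≤ sortedComp xstar j := fun j hj =>
    hstar.sortedComp_le hxc j (by have := Fin.lt_def.1 hj; omega)
  have hslack := expLoss_le_add_of_le_sInf_add hbdd hc.le hγ0 hxc hstar.1 hloss k
  exact sub_le_one_div_mul_log_of_mul_exp_le hc (by linarith)
    (sub_pos.2 (by exact_mod_cast k.is_lt)) (one_sub_mul_exp_sortedComp_le hc.le hprefix hslack)

theorem first_two_components_rate {n : ℕ} (hn : 2 ≤ n) (X : Set (Fin n → ℝ))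
    (hbdd : BddAbove ((fun x : Fin n → ℝ => ‖x‖) '' X))
    (xstar : Fin n → ℝ) (hstar : IsLexMax X xstar)
    (c γ : ℝ) (hc : 0 < c) (hγ0 : 0 ≤ γ) (hγ1 : γ < 1)
    (xc : Fin n → ℝ) (hxc : xc ∈ X)
    (hloss : expLoss c xc ≤ sInf (expLoss c '' X) + γ * Real.exp (-c * supNorm X)) :
    ∀ k : Fin n, k.val < 2 →
      sortedComp xstar k - sortedComp xc k ≤ (1 / c) * Real.log ((n - k.val) / (1 - γ)) :=
  first_two_components_rate_general X hbdd xstar hstar c γ hc hγ0 hγ1 xc hxc hloss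
end

section
/- Let X ⊆ ℝ^n be a convex polytope (convex hull of finitely many points) and I ⊊ [n]. Then G_I(x) = sup{ min_{i ∈ [n]∖I} z_i : z ∈ X, z_i = x_i for i ∈ I } is lower semicontinuous relative to X: for any sequence x_t in X converging to x ∈ X, liminf_t G_I(x_t) ≥ G_I(x). -/
open Filter Topology

/-- f_I(z) = min of the components of z outside I. -/
noncomputable def fI {n : ℕ} (I : Finset (Fin n)) (z : Fin n → ℝ) : ℝ :=
  sInf {r : ℝ | ∃ i : Fin n, i ∉ I ∧ r = z i}

/-- G_I with values in the extended reals (sup ∅ = −∞). -/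
noncomputable def GfunE {n : ℕ} (X : Set (Fin n → ℝ)) (I : Finset (Fin n)) (x : Fin n → ℝ) :
    EReal :=
  sSup {v : EReal | ∃ z ∈ X, (∀ i ∈ I, z i = x i) ∧ v = (fI I z : EReal)}

/-!
Near each of its points `x`, a polytope `X` looks like a cone: for `c ≥ 0` and `y ∈ X` close to
`x`, the point `x + c (y - x)` is still in `X`. Indeed, `y` has barycentric weights `w` close to
weights `μ` of `x` (compactness of the simplex), and `μ + c (w - μ)` are again weights: close to
`μᵢ > 0` where `μᵢ > 0`, and equal to `c wᵢ ≥ 0` where `μᵢ = 0`. Taking `c = (1 - θ)⁻¹`,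
convexity puts `y + θ (z - x)` in `X` for every `z ∈ X` and `θ < 1`. If `z` agrees with `x` on
`I`, this point agrees with `y` on `I`, so `G_I(y) ≥ f_I(y + θ (z - x)) → f_I(x + θ (z - x))` as
`y → x`; letting `θ → 1` gives `liminf G_I(y) ≥ f_I(z)`.
-/

section Polytope

variable {E : Type*} [AddCommGroup E] [Module ℝ E] [TopologicalSpace E] [IsTopologicalAddGroup E]
  [ContinuousSMul ℝ E] [T2Space E]

theorem eventually_lineMap_mem_image_stdSimplex {ι : Type*} [Fintype ι] (L : (ι → ℝ) →ₗ[ℝ] E)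
    {x : E} {c : ℝ} (hc : 0 ≤ c) :
    ∀ᶠ y in 𝓝[L '' stdSimplex ℝ ι] x, AffineMap.lineMap x y c ∈ L '' stdSimplex ℝ ι := by
  set X := L '' stdSimplex ℝ ι
  choose! w hwΔ hLw using fun y (hy : y ∈ X) => hy
  refine mem_iff_ultrafilter.2 fun 𝒰 h𝒰 => ?_
  have hX : X ∈ 𝒰 := h𝒰 self_mem_nhdsWithin
  obtain ⟨μ, hμΔ, hwμ⟩ := (isCompact_stdSimplex ℝ ι).ultrafilter_le_nhds (𝒰.map w)
    (le_principal_iff.2 <| Ultrafilter.mem_map.2 <| mem_of_superset hX hwΔ)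
  have hLμ : L μ = x := by
    refine tendsto_nhds_unique ?_ (h𝒰.trans nhdsWithin_le_nhds)
    exact ((L.continuous_on_pi.tendsto μ).comp hwμ).congr' (mem_of_superset hX hLw)
  have hweights : ∀ᶠ y in 𝒰, ∀ i, 0 ≤ μ i + c * (w y i - μ i) := by
    refine eventually_all.2 fun i => ?_
    rcases (hμΔ.1 i).eq_or_lt with hμi | hμi
    · filter_upwards [hX] with y hy
      simpa [← hμi] using mul_nonneg hc ((hwΔ y hy).1 i)
    · have hlim : Tendsto (fun y => μ i + c * (w y i - μ i)) 𝒰 (𝓝 (μ i)) := by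
        simpa using tendsto_const_nhds.add
          (((((continuous_apply i).tendsto μ).comp hwμ).sub_const (μ i)).const_mul c)
      exact (hlim.eventually (lt_mem_nhds hμi)).mono fun _ h => h.le
  filter_upwards [hX, hweights] with y hy hnonneg
  refine ⟨μ + c • (w y - μ), ⟨hnonneg, ?_⟩, ?_⟩
  · simp [Finset.sum_add_distrib, Finset.sum_sub_distrib, ← Finset.mul_sum, hμΔ.2, (hwΔ y hy).2]
  · simp [AffineMap.lineMap_apply_module', hLw y hy, hLμ, add_comm]

theorem Set.Finite.eventually_lineMap_mem_convexHull {s : Set E} (hs : s.Finite) {x : E} {c : ℝ}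
    (hc : 0 ≤ c) :
    ∀ᶠ y in 𝓝[convexHull ℝ s] x, AffineMap.lineMap x y c ∈ convexHull ℝ s := by
  let := hs.fintype
  rw [hs.convexHull_eq_image]
  exact eventually_lineMap_mem_image_stdSimplex _ hc

theorem Set.Finite.eventually_add_smul_sub_mem_convexHull {s : Set E} (hs : s.Finite) {x z : E}
    (hz : z ∈ convexHull ℝ s) {θ : ℝ} (hθ₀ : 0 ≤ θ) (hθ₁ : θ < 1) :
    ∀ᶠ y in 𝓝[convexHull ℝ s] x, y + θ • (z - x) ∈ convexHull ℝ s := by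
  have hθ : (1 - θ) * (1 - θ)⁻¹ = 1 := mul_inv_cancel₀ (by linarith)
  filter_upwards [hs.eventually_lineMap_mem_convexHull (inv_nonneg.2 (sub_nonneg.2 hθ₁.le))]
    with y hy
  convert convex_convexHull ℝ s hy hz (sub_nonneg.2 hθ₁.le) hθ₀ (sub_add_cancel 1 θ) using 1
  rw [AffineMap.lineMap_apply_module']
  linear_combination (norm := module) hθ • (x - y)

end Polytope

theorem continuous_fI {n : ℕ} (I : Finset (Fin n)) : Continuous (fI I) := by
  have hfI : fI I = fun z => sInf (z '' ↑Iᶜ) := by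
    ext z
    simp only [fI, Finset.coe_compl, Set.image, Set.mem_compl_iff, Finset.mem_coe, eq_comm]
  rcases Iᶜ.eq_empty_or_nonempty with hI | hI
  · simpa [hfI, hI] using continuous_const
  · convert Continuous.finset_inf'_apply (L := ℝ) hI fun i _ => continuous_apply i using 1
    rw [hfI]
    ext z
    rw [Finset.inf'_eq_csInf_image, Finset.coe_compl]

theorem Gfun_lsc_on_polytope_general {n : ℕ} (X : Set (Fin n → ℝ))
    (S : Finset (Fin n → ℝ)) (hX : X = convexHull ℝ (S : Set (Fin n → ℝ)))
    (I : Finset (Fin n)) :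
    ∀ x ∈ X, ∀ seq : ℕ → (Fin n → ℝ), (∀ t, seq t ∈ X) →
      Tendsto seq atTop (𝓝 x) →
      GfunE X I x ≤ liminf (fun t => GfunE X I (seq t)) atTop := by
  subst hX
  intro x _ seq hseq htends
  have hseqX : Tendsto seq atTop (𝓝[convexHull ℝ ↑S] x) :=
    tendsto_nhdsWithin_iff.2 ⟨htends, .of_forall hseq⟩
  have hfI : Continuous fun z => (fI I z : EReal) :=
    continuous_coe_real_ereal.comp (continuous_fI I)
  refine sSup_le ?_
  rintro _ ⟨z, hz, hzI, rfl⟩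
  have hθlim : Tendsto (fun θ : ℝ => (fI I (x + θ • (z - x)) : EReal)) (𝓝[<] 1) (𝓝 (fI I z)) := by
    have hline : Continuous fun θ : ℝ => x + θ • (z - x) := by fun_prop
    simpa [Function.comp_def] using
      ((hfI.comp hline).tendsto 1).mono_left nhdsWithin_le_nhds
  refine le_of_tendsto hθlim ?_
  filter_upwards [Ioo_mem_nhdsLT zero_lt_one] with θ ⟨hθ₀, hθ₁⟩
  have hmem := hseqX.eventually
    (S.finite_toSet.eventually_add_smul_sub_mem_convexHull hz hθ₀.le hθ₁)
  calc (fI I (x + θ • (z - x)) : EReal)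
      = liminf (fun t => (fI I (seq t + θ • (z - x)) : EReal)) atTop :=
        (((hfI.tendsto _).comp (htends.add_const _)).liminf_eq).symm
    _ ≤ liminf (fun t => GfunE (convexHull ℝ ↑S) I (seq t)) atTop :=
        liminf_le_liminf <| hmem.mono fun t ht =>
          le_sSup ⟨_, ht, fun i hi => by simp [hzI i hi], rfl⟩

theorem Gfun_lsc_on_polytope {n : ℕ} (X : Set (Fin n → ℝ))
    (S : Finset (Fin n → ℝ)) (hX : X = convexHull ℝ (S : Set (Fin n → ℝ)))
    (I : Finset (Fin n)) (hI : I ≠ Finset.univ) :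
    ∀ x ∈ X, ∀ seq : ℕ → (Fin n → ℝ), (∀ t, seq t ∈ X) →
      Tendsto seq atTop (𝓝 x) →
      GfunE X I x ≤ liminf (fun t => GfunE X I (seq t)) atTop :=
  Gfun_lsc_on_polytope_general X S hX I
end

section
/- Let X = { x ∈ [−1,0]×[0,1]×[0,1] : x_1(x_3 − 1) ≥ x_2^2 } and, for ε ∈ (0,1), let x_ε = (−ε², ε/2, 3/4). Then x_ε ∈ X and: (a) σ_1(x_ε) ≥ sup_{x∈X} σ_1(x) − ε; (b) for all x ∈ X with σ_1(x) ≥ σ_1(x_ε), σ_2(x) ≤ ε, so σ_2(x_ε) ≥ sup{σ_2(x) : x ∈ X, σ_1(x) ≥ σ_1(x_ε)} − ε; (c) σ_3(x_ε) = 3/4 = sup{σ_3(x) : x ∈ X, σ_1(x) ≥ σ_1(x_ε), σ_2(x) ≥ σ_2(x_ε)}. Consequently X is not lexicographically stable (its lexicographic maximum is (0,0,1) with σ_3 = 1, while σ_3(x_ε) = 3/4 for all ε). -/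
/-- Lexicographic stability. -/
def LexStable {n : ℕ} (X : Set (Fin n → ℝ)) : Prop :=
  ∀ δ > 0, ∃ ε > 0, ∀ xhat, PossibleOutput X ε xhat →
    ∀ xstar, IsLexMax X xstar → ∀ k : Fin n, sortedComp xstar k - sortedComp xhat k < δ

/-!
On `X` the smallest coordinate is `x 0 ≤ 0`, and the constraint reads
`x 1 ^ 2 ≤ (-x 0) * (1 - x 2)`. Once the first stage forces `-ε ^ 2 ≤ x 0`, this gives
`x 1 ^ 2 ≤ ε ^ 2 * (1 - x 2)`: the second sorted coordinate can be at most `ε`, and as soon as it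
is at least `ε / 2` the third is capped at `3 / 4`. So the point `(-ε ^ 2, ε / 2, 3 / 4)` is an
admissible output for every `ε`, while the lexicographic maximum `(0, 0, 1)` has third sorted
coordinate `1`.
-/

theorem sortedComp_eq_of_monotone_comp {n : ℕ} {x : Fin n → ℝ} {σ : Equiv.Perm (Fin n)}
    (h : Monotone (x ∘ σ)) (k : Fin n) : sortedComp x k = x (σ k) :=
  (congrFun (Tuple.comp_sort_eq_comp_iff_monotone.2 h) k).symm

theorem sortedComp_of_monotone {n : ℕ} {x : Fin n → ℝ} (h : Monotone x) (k : Fin n) :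
    sortedComp x k = x k :=
  sortedComp_eq_of_monotone_comp (σ := Equiv.refl _) h k

theorem monotone_fin_three {α : Type*} [Preorder α] {x : Fin 3 → α} (h01 : x 0 ≤ x 1)
    (h12 : x 1 ≤ x 2) : Monotone x :=
  Fin.monotone_iff_le_succ.2 fun i => by fin_cases i <;> assumption

theorem sortedComp_fin_three {x : Fin 3 → ℝ} (h1 : x 0 ≤ x 1) (h2 : x 0 ≤ x 2) :
    sortedComp x 0 = x 0 ∧ sortedComp x 1 = min (x 1) (x 2) ∧
      sortedComp x 2 = max (x 1) (x 2) := by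
  rcases le_total (x 1) (x 2) with h12 | h21
  · simp only [sortedComp_of_monotone (monotone_fin_three h1 h12), min_eq_left h12,
      max_eq_right h12, and_self]
  · have hσ0 : Equiv.swap (1 : Fin 3) 2 0 = 0 := by decide
    have hx : Monotone (x ∘ Equiv.swap 1 2) :=
      monotone_fin_three (by simpa [hσ0] using h2) (by simpa using h21)
    simp [sortedComp_eq_of_monotone_comp hx, hσ0, min_eq_right h21, max_eq_left h21]

theorem PossibleOutput.mono {n : ℕ} {X : Set (Fin n → ℝ)} {ε ε' : ℝ} {out : Fin n → ℝ}
    (h : PossibleOutput X ε out) (hε : ε ≤ ε') : PossibleOutput X ε' out := by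
  obtain ⟨seq, hlast, hstep⟩ := h
  exact ⟨seq, hlast, fun k => ⟨(hstep k).1, (hstep k).2.1, by linarith [(hstep k).2.2]⟩⟩

theorem possibleOutput_of_Hfun_sub_le {n : ℕ} {X : Set (Fin n → ℝ)} {ε : ℝ} {y : Fin n → ℝ}
    (hy : y ∈ X) (h : ∀ k, Hfun X k y - ε ≤ sortedComp y k) : PossibleOutput X ε y :=
  ⟨fun _ => y, rfl, fun k => ⟨hy, fun _ _ => le_rfl, h k⟩⟩

theorem not_lexStable_of_gap {n : ℕ} {X : Set (Fin n → ℝ)} {xstar : Fin n → ℝ}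
    (hmax : IsLexMax X xstar) (k : Fin n) {δ : ℝ} (hδ : 0 < δ)
    (h : ∀ ε > 0, ∃ xhat, PossibleOutput X ε xhat ∧ δ ≤ sortedComp xstar k - sortedComp xhat k) :
    ¬ LexStable X := by
  intro hX
  obtain ⟨ε, hε, hstable⟩ := hX δ hδ
  obtain ⟨xhat, hout, hgap⟩ := h ε hε
  exact (hstable xhat hout xstar hmax k).not_ge hgap

namespace ConeSlice

def X : Set (Fin 3 → ℝ) := {x | x 0 ∈ Set.Icc (-1 : ℝ) 0 ∧ x 1 ∈ Set.Icc (0 : ℝ) 1 ∧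
  x 2 ∈ Set.Icc (0 : ℝ) 1 ∧ (x 1) ^ 2 ≤ x 0 * (x 2 - 1)}

noncomputable def approx (ε : ℝ) : Fin 3 → ℝ := ![-ε ^ 2, ε / 2, 3 / 4]

variable {x : Fin 3 → ℝ} {ε : ℝ}

theorem sortedComp_of_mem (hx : x ∈ X) :
    sortedComp x 0 = x 0 ∧ sortedComp x 1 = min (x 1) (x 2) ∧
      sortedComp x 2 = max (x 1) (x 2) :=
  sortedComp_fin_three (hx.1.2.trans hx.2.1.1) (hx.1.2.trans hx.2.2.1.1)

theorem sortedComp_zero_nonpos (hx : x ∈ X) : sortedComp x 0 ≤ 0 :=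
  (sortedComp_of_mem hx).1 ▸ hx.1.2

theorem coord_one_sq_le (hx : x ∈ X) (h0 : -ε ^ 2 ≤ x 0) : x 1 ^ 2 ≤ ε ^ 2 * (1 - x 2) := by
  obtain ⟨-, -, ⟨-, h2⟩, hcone⟩ := hx
  nlinarith [mul_le_mul_of_nonneg_right h0 (sub_nonneg.2 h2)]

theorem coord_one_le (hx : x ∈ X) (hε : 0 ≤ ε) (h0 : -ε ^ 2 ≤ x 0) : x 1 ≤ ε := by
  have := coord_one_sq_le hx h0
  nlinarith [hx.2.1.1, hx.2.2.1.1]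

/-- `ε ^ 2 / 4 ≤ x 1 ^ 2 ≤ ε ^ 2 * (1 - x 2)` bounds `x 2`, and
`x 1 ^ 2 ≤ ε ^ 2 * (1 - ε / 2) ≤ 1 / 2 < (3 / 4) ^ 2` bounds `x 1`. -/
theorem coords_le_three_quarters (hx : x ∈ X) (hε : 0 < ε) (hε1 : ε ≤ 1) (h0 : -ε ^ 2 ≤ x 0)
    (h1 : ε / 2 ≤ x 1) (h2 : ε / 2 ≤ x 2) : x 1 ≤ 3 / 4 ∧ x 2 ≤ 3 / 4 := by
  have key := coord_one_sq_le hx h0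
  have hx2 : x 2 ≤ 3 / 4 := by nlinarith [mul_pos hε hε]
  refine ⟨?_, hx2⟩
  nlinarith [mul_le_mul_of_nonneg_left (sub_le_sub_left h2 1) (sq_nonneg ε),
    pow_le_one₀ hε.le hε1 (n := 2)]

theorem approx_mem (hε : 0 ≤ ε) (hε1 : ε ≤ 1) : approx ε ∈ X := by
  refine ⟨⟨?_, ?_⟩, ⟨?_, ?_⟩, ⟨?_, ?_⟩, ?_⟩ <;> simp [approx, Matrix.cons_val] <;>
    nlinarith [abs_of_nonneg hε]

theorem sortedComp_approx (hε : 0 ≤ ε) (hε1 : ε ≤ 1) (k : Fin 3) :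
    sortedComp (approx ε) k = approx ε k :=
  sortedComp_of_monotone (monotone_fin_three (by simp [approx]; nlinarith)
    (by simp [approx]; linarith)) k

theorem sortedComp_one_le (hx : x ∈ X) (hε : 0 ≤ ε) (hε1 : ε ≤ 1)
    (h0 : sortedComp (approx ε) 0 ≤ sortedComp x 0) : sortedComp x 1 ≤ ε := by
  obtain ⟨hx0, hx1, -⟩ := sortedComp_of_mem hx
  rw [sortedComp_approx hε hε1, hx0] at h0
  exact hx1 ▸ (min_le_left _ _).trans (coord_one_le hx hε h0)

theorem sortedComp_two_le (hx : x ∈ X) (hε : 0 < ε) (hε1 : ε ≤ 1)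
    (h0 : sortedComp (approx ε) 0 ≤ sortedComp x 0)
    (h1 : sortedComp (approx ε) 1 ≤ sortedComp x 1) : sortedComp x 2 ≤ 3 / 4 := by
  obtain ⟨hx0, hx1, hx2⟩ := sortedComp_of_mem hx
  rw [sortedComp_approx hε.le hε1, hx0] at h0
  rw [sortedComp_approx hε.le hε1, hx1, le_min_iff] at h1
  obtain ⟨h1, h2⟩ := coords_le_three_quarters hx hε hε1 h0 h1.1 h1.2
  exact hx2 ▸ max_le h1 h2

theorem sSup_sortedComp_zero_nonpos : sSup {v : ℝ | ∃ x ∈ X, v = sortedComp x 0} ≤ 0 :=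
  Real.sSup_le (fun _ ⟨_, hx, hv⟩ => hv ▸ sortedComp_zero_nonpos hx) le_rfl

theorem sSup_sortedComp_one_le (hε : 0 ≤ ε) (hε1 : ε ≤ 1) :
    sSup {v : ℝ | ∃ x ∈ X, sortedComp (approx ε) 0 ≤ sortedComp x 0 ∧ v = sortedComp x 1} ≤ ε :=
  Real.sSup_le (fun _ ⟨_, hx, h0, hv⟩ => hv ▸ sortedComp_one_le hx hε hε1 h0) hε

theorem isGreatest_sortedComp_two (hε : 0 < ε) (hε1 : ε ≤ 1) :
    IsGreatest {v : ℝ | ∃ x ∈ X, sortedComp (approx ε) 0 ≤ sortedComp x 0 ∧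
      sortedComp (approx ε) 1 ≤ sortedComp x 1 ∧ v = sortedComp x 2} (3 / 4) :=
  ⟨⟨approx ε, approx_mem hε.le hε1, le_rfl, le_rfl, (sortedComp_approx hε.le hε1 2).symm⟩,
    fun _ ⟨_, hx, h0, h1, hv⟩ => hv ▸ sortedComp_two_le hx hε hε1 h0 h1⟩

theorem Hfun_zero_nonpos (y : Fin 3 → ℝ) : Hfun X 0 y ≤ 0 :=
  Real.sSup_le (fun _ ⟨_, hz, _, hv⟩ => hv ▸ sortedComp_zero_nonpos hz) le_rfl

theorem Hfun_one_approx_le (hε : 0 ≤ ε) (hε1 : ε ≤ 1) : Hfun X 1 (approx ε) ≤ ε :=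
  Real.sSup_le (fun _ ⟨_, hz, h, hv⟩ => hv ▸ sortedComp_one_le hz hε hε1 (h 0 Fin.zero_lt_one)) hε

theorem Hfun_two_approx_le (hε : 0 < ε) (hε1 : ε ≤ 1) : Hfun X 2 (approx ε) ≤ 3 / 4 :=
  Real.sSup_le (fun _ ⟨_, hz, h, hv⟩ =>
    hv ▸ sortedComp_two_le hz hε hε1 (h 0 (by decide)) (h 1 (by decide))) (by norm_num)

theorem Hfun_approx_sub_le (hε : 0 < ε) (hε1 : ε ≤ 1) (k : Fin 3) :
    Hfun X k (approx ε) - ε ≤ sortedComp (approx ε) k := by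
  rw [sortedComp_approx hε.le hε1]
  fin_cases k
  · show Hfun X 0 (approx ε) - ε ≤ -ε ^ 2
    nlinarith [Hfun_zero_nonpos (approx ε)]
  · show Hfun X 1 (approx ε) - ε ≤ ε / 2
    linarith [Hfun_one_approx_le hε.le hε1]
  · show Hfun X 2 (approx ε) - ε ≤ 3 / 4
    linarith [Hfun_two_approx_le hε hε1]

theorem possibleOutput_approx (hε : 0 < ε) (hε1 : ε ≤ 1) : PossibleOutput X ε (approx ε) :=
  possibleOutput_of_Hfun_sub_le (approx_mem hε.le hε1) (Hfun_approx_sub_le hε hε1)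

theorem sortedComp_lexMax (k : Fin 3) : sortedComp ![0, 0, 1] k = ![(0 : ℝ), 0, 1] k :=
  sortedComp_of_monotone (monotone_fin_three (by simp) (by simp)) k

theorem isLexMax : IsLexMax X ![0, 0, 1] := by
  refine ⟨by simp [X], fun x hx => ?_⟩
  obtain ⟨hx0, hx1, hx2⟩ := sortedComp_of_mem hx
  obtain ⟨⟨-, h0⟩, ⟨h1, -⟩, ⟨h2, h2'⟩, hcone⟩ := hx
  rcases h0.lt_or_eq with h0 | h0
  · exact Or.inr ⟨0, fun j hj => absurd hj (Fin.not_lt_zero j), by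
      simpa [hx0, sortedComp_lexMax] using h0⟩
  have h1 : x 1 = 0 := by nlinarith
  rcases h2'.lt_or_eq with h2' | h2'
  · refine Or.inr ⟨2, fun j hj => ?_, by simpa [hx2, h1, h2, sortedComp_lexMax] using h2'⟩
    fin_cases j
    all_goals simp_all [sortedComp_lexMax]
  · left; ext i; fin_cases i <;> simp [h0, h1, h2']

theorem not_lexStable : ¬ LexStable X := by
  refine not_lexStable_of_gap isLexMax 2 (δ := 1 / 4) (by norm_num) fun ε hε => ?_
  have hε' : 0 < min ε 1 := lt_min hε one_pos
  refine ⟨approx (min ε 1),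
    (possibleOutput_approx hε' (min_le_right _ _)).mono (min_le_left _ _), ?_⟩
  rw [sortedComp_approx hε'.le (min_le_right _ _), sortedComp_lexMax]
  show (1 : ℝ) / 4 ≤ 1 - 3 / 4
  norm_num

end ConeSlice

theorem compact_convex_not_lex_stable :
    let X : Set (Fin 3 → ℝ) := {x | x 0 ∈ Set.Icc (-1 : ℝ) 0 ∧ x 1 ∈ Set.Icc (0 : ℝ) 1 ∧
      x 2 ∈ Set.Icc (0 : ℝ) 1 ∧ (x 1) ^ 2 ≤ x 0 * (x 2 - 1)}
    (∀ ε : ℝ, ε ∈ Set.Ioo (0 : ℝ) 1 →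
      let xe : Fin 3 → ℝ := ![-ε ^ 2, ε / 2, 3 / 4]
      xe ∈ X ∧
      -- (a)
      sSup {v : ℝ | ∃ x ∈ X, v = sortedComp x 0} - ε ≤ sortedComp xe 0 ∧
      -- (b)
      (∀ x ∈ X, sortedComp xe 0 ≤ sortedComp x 0 → sortedComp x 1 ≤ ε) ∧
      sSup {v : ℝ | ∃ x ∈ X, sortedComp xe 0 ≤ sortedComp x 0 ∧ v = sortedComp x 1} - ε ≤
        sortedComp xe 1 ∧
      -- (c)
      sortedComp xe 2 = 3 / 4 ∧
      (3 / 4 : ℝ) = sSup {v : ℝ | ∃ x ∈ X, sortedComp xe 0 ≤ sortedComp x 0 ∧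
        sortedComp xe 1 ≤ sortedComp x 1 ∧ v = sortedComp x 2} ∧
      PossibleOutput X ε xe) ∧
    IsLexMax X ![0, 0, 1] ∧ sortedComp (![0, 0, 1] : Fin 3 → ℝ) 2 = 1 ∧
    ¬ LexStable X := by
  intro X
  refine ⟨fun ε ⟨hε, hε1⟩ => ?_, ConeSlice.isLexMax, by simp [ConeSlice.sortedComp_lexMax],
    ConeSlice.not_lexStable⟩
  intro xe
  have hsorted : ∀ k, sortedComp xe k = xe k := ConeSlice.sortedComp_approx hε.le hε1.le
  have hxe0 : sortedComp xe 0 = -ε ^ 2 := hsorted 0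
  have hxe1 : sortedComp xe 1 = ε / 2 := hsorted 1
  refine ⟨ConeSlice.approx_mem hε.le hε1.le, ?_,
    fun x hx h0 => ConeSlice.sortedComp_one_le hx hε.le hε1.le h0, ?_, hsorted 2,
    (ConeSlice.isGreatest_sortedComp_two hε hε1.le).csSup_eq.symm,
    ConeSlice.possibleOutput_approx hε hε1.le⟩
  · rw [hxe0]
    exact (sub_le_sub_right ConeSlice.sSup_sortedComp_zero_nonpos ε).trans (by nlinarith)
  · rw [hxe1]
    exact (sub_le_sub_right (ConeSlice.sSup_sortedComp_one_le hε.le hε1.le) ε).trans (by linarith)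
end

section
/- For all n ≥ 8 and c ≥ 2, there exists ε > 0 such that L_c(x^(ε)) < L_c(x*), where x* = (0,...,0,1) ∈ ℝ^n and x^(ε) = (−ε/2, ε/4,...,ε/4, 1/2) (with n−2 middle components equal to ε/4). In particular, with ε = 2/c: exp(1) − 1 + (n−2)(exp(−1/2) − 1) + exp(−c/2) − exp(−c) < 0. -/
lemma sum_two_ite {n : ℕ} (a b : Fin n) (hab : a ≠ b) (x y z : ℝ) :
    ∑ i : Fin n, (if i = a then x else if i = b then y else z)
      = x + y + ((n : ℝ) - 2) * z := by
  have h : ∀ i ∈ Finset.univ, (if i = a then x else if i = b then y else z)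
      = z + ((if i = a then x - z else 0) + (if i = b then y - z else 0)) := by
    intro i _
    by_cases h1 : i = a
    · subst h1; simp [hab]
    · by_cases h2 : i = b
      · subst h2; simp [Ne.symm hab]
      · simp [h1, h2]
  rw [Finset.sum_congr rfl h, Finset.sum_add_distrib, Finset.sum_add_distrib,
    Finset.sum_const, Finset.sum_ite_eq', Finset.sum_ite_eq']
  simp [Finset.card_univ]
  ring

lemma sum_one_ite {n : ℕ} (a : Fin n) (x z : ℝ) :
    ∑ i : Fin n, (if i = a then x else z) = x + ((n : ℝ) - 1) * z := by
  have h : ∀ i ∈ Finset.univ, (if i = a then x else z)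
      = z + (if i = a then x - z else 0) := by
    intro i _
    by_cases h1 : i = a <;> simp [h1]
  rw [Finset.sum_congr rfl h, Finset.sum_add_distrib, Finset.sum_const,
    Finset.sum_ite_eq']
  simp [Finset.card_univ]
  ring

lemma key_num (n : ℕ) (hn : 8 ≤ n) (c : ℝ) (hc : 2 ≤ c) :
    Real.exp 1 - 1 + ((n : ℝ) - 2) * (Real.exp (-1 / 2) - 1) +
      Real.exp (-c / 2) - Real.exp (-c) < 0 := by
  have hn' : (6 : ℝ) ≤ (n : ℝ) - 2 := by
    have : (8 : ℝ) ≤ (n : ℝ) := by exact_mod_cast hn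
    linarith
  have ha : Real.exp (-1 / 2) * Real.exp (-1 / 2) = Real.exp (-1) := by
    rw [← Real.exp_add]; norm_num
  have hb : Real.exp (-1) * Real.exp 1 = 1 := by
    rw [← Real.exp_add]; norm_num
  have hE1 : Real.exp 1 < 2.7182818286 := Real.exp_one_lt_d9
  have hE2 : 2.7182818283 < Real.exp 1 := Real.exp_one_gt_d9
  have hhalf : Real.exp (-1 / 2) < 1 := by
    rw [Real.exp_lt_one_iff]; norm_num
  have hpos : 0 < Real.exp (-1 / 2) := Real.exp_pos _
  have hcexp : Real.exp (-c / 2) ≤ Real.exp (-1) := by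
    apply Real.exp_le_exp.mpr; linarith
  have hcpos : 0 < Real.exp (-c) := Real.exp_pos _
  have h6 : ((n : ℝ) - 2) * (Real.exp (-1 / 2) - 1) ≤ 6 * (Real.exp (-1 / 2) - 1) := by
    nlinarith
  have hkey : Real.exp 1 + 6 * Real.exp (-1 / 2) + Real.exp (-1) < 7 := by
    nlinarith [sq_nonneg (Real.exp (-1/2) - 0.6066), Real.exp_pos (-1), sq_nonneg (Real.exp 1 - 2.71828)]
  linarith

theorem exp_loss_counterexample_inequality {n : ℕ} (hn : 8 ≤ n) (c : ℝ) (hc : 2 ≤ c) :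
    (∃ ε > (0 : ℝ),
      expLoss c (fun i : Fin n => if i.val = 0 then -ε / 2
        else if i.val = n - 1 then 1 / 2 else ε / 4) <
      expLoss c (fun i : Fin n => if i.val = n - 1 then (1 : ℝ) else 0)) ∧
    Real.exp 1 - 1 + ((n : ℝ) - 2) * (Real.exp (-1 / 2) - 1) +
      Real.exp (-c / 2) - Real.exp (-c) < 0 := by
  have key := key_num n hn c hc
  have hcpos : (0 : ℝ) < c := by linarith
  have hn0 : 0 < n := by omega
  have hn1 : n - 1 < n := by omega
  refine ⟨⟨2 / c, by positivity, ?_⟩, key⟩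
  set a0 : Fin n := ⟨0, hn0⟩
  set a1 : Fin n := ⟨n - 1, hn1⟩
  have hab : a0 ≠ a1 := by
    simp only [a0, a1, ne_eq, Fin.mk.injEq]
    omega
  have hL : expLoss c (fun i : Fin n => if i.val = 0 then -(2/c) / 2
        else if i.val = n - 1 then 1 / 2 else (2/c) / 4)
      = Real.exp 1 + Real.exp (-c / 2) + ((n : ℝ) - 2) * Real.exp (-1 / 2) := by
    unfold expLoss
    rw [← sum_two_ite a0 a1 hab (Real.exp 1) (Real.exp (-c/2)) (Real.exp (-1/2))]
    apply Finset.sum_congr rfl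
    intro i _
    simp only []
    have h0 : (i = a0) ↔ (i.val = 0) := by simp [a0, Fin.ext_iff]
    have h1 : (i = a1) ↔ (i.val = n - 1) := by simp [a1, Fin.ext_iff]
    by_cases hi0 : i.val = 0
    · rw [if_pos hi0, if_pos (h0.mpr hi0)]
      congr 1
      field_simp
    · rw [if_neg hi0, if_neg (fun h => hi0 (h0.mp h))]
      by_cases hi1 : i.val = n - 1
      · rw [if_pos hi1, if_pos (h1.mpr hi1)]
        ring_nf
      · rw [if_neg hi1, if_neg (fun h => hi1 (h1.mp h))]
        congr 1
        field_simp
        ring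
  have hR : expLoss c (fun i : Fin n => if i.val = n - 1 then (1 : ℝ) else 0)
      = Real.exp (-c) + ((n : ℝ) - 1) * 1 := by
    unfold expLoss
    rw [← sum_one_ite a1 (Real.exp (-c)) 1]
    apply Finset.sum_congr rfl
    intro i _
    simp only []
    have h1 : (i = a1) ↔ (i.val = n - 1) := by simp [a1, Fin.ext_iff]
    by_cases hi1 : i.val = n - 1
    · rw [if_pos hi1, if_pos (h1.mpr hi1)]
      ring_nf
    · rw [if_neg hi1, if_neg (fun h => hi1 (h1.mp h))]
      simp
  rw [hL, hR]
  linarith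
end
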